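/- arXiv:2010.07618 — 3 statements merged into one kernel-verified Lean document; each statement's English description precedes it below -/
import Mathlib

section
/- Let X, Y be independent standard normal random variables, and let c₁, c₂ ∈ ℝ. Then c₁(X − Y) + c₂ Z, where Z is standard normal independent of (X,Y), is a centered Gaussian random variable with variance 2c₁² + c₂². Consequently, if Ẑ_t − Z_t, normalized by √ε, converges in distribution to U'·√(bσ/(2f))·(ζ̂ − ξ̂) + (U̇/I)·N with ζ̂, ξ̂, N independent standard normals (conditionally on Y_t), then ε^{−1} E(Ẑ_t − Z_t)² → (bσ/f)·E[U'_y(t,Y_t,ϑ₀)²] + E[U̇(t,Y_t,ϑ₀)²]/I. -/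
/-!
`X - Y` and `Z` are independent centred Gaussians of variances `2` and `1`, so the law of
`c₁ (X - Y) + c₂ Z` follows from the stability of Gaussians under independent sums. For the second
moment, expand the square: since the coefficients `(U₁, U₂)` are independent of the noise
`(X - Y, Z)`, every term factorises, and the cross term vanishes because `X - Y` and `Z` are
uncorrelated.
-/

open Real Filter MeasureTheory ProbabilityTheory
open scoped NNReal

section

variable {Ω : Type*} [MeasurableSpace Ω] {P : Measure Ω} {X Y Z : Ω → ℝ} {v : ℝ≥0}

lemma integral_eq_zero_of_map_eq_gaussianReal (hX : AEMeasurable X P)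
    (hlaw : P.map X = gaussianReal 0 v) : ∫ ω, X ω ∂P = 0 := by
  rw [HasLaw.integral_eq ⟨hX, hlaw⟩, integral_id_gaussianReal]

lemma integral_sq_eq_of_map_eq_gaussianReal (hX : AEMeasurable X P)
    (hlaw : P.map X = gaussianReal 0 v) : ∫ ω, X ω ^ 2 ∂P = v := by
  rw [← variance_of_integral_eq_zero hX (integral_eq_zero_of_map_eq_gaussianReal hX hlaw),
    HasLaw.variance_eq ⟨hX, hlaw⟩, variance_id_gaussianReal]

lemma memLp_two_of_map_eq_gaussianReal (hX : AEMeasurable X P)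
    (hlaw : P.map X = gaussianReal 0 v) : MemLp X 2 P := by
  have h : MemLp id 2 (P.map X) := hlaw ▸ memLp_id_gaussianReal 2
  exact (memLp_map_measure_iff aestronglyMeasurable_id hX).mp h

lemma map_sub_eq_gaussianReal_of_indepFun (hY : AEMeasurable Y P)
    (hXY : IndepFun X Y P) {v₁ v₂ : ℝ≥0}
    (hXlaw : P.map X = gaussianReal 0 v₁) (hYlaw : P.map Y = gaussianReal 0 v₂) :
    P.map (fun ω => X ω - Y ω) = gaussianReal 0 (v₁ + v₂) := by
  have hnegY : P.map (-Y) = gaussianReal 0 v₂ := by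
    simpa using (gaussianReal_neg ⟨hY, hYlaw⟩).map_eq
  have hXnegY : IndepFun X (-Y) P := hXY.comp measurable_id measurable_neg
  rw [show (fun ω => X ω - Y ω) = X + -Y from funext fun ω => sub_eq_add_neg _ _]
  simpa using gaussianReal_add_gaussianReal_of_indepFun hXnegY hXlaw hnegY

lemma indepFun_sub_of_iIndepFun (hX : Measurable X) (hY : Measurable Y) (hZ : Measurable Z)
    (hindep : iIndepFun ![X, Y, Z] P) : IndepFun (fun ω => X ω - Y ω) Z P := by
  have hmeas : ∀ i, Measurable (![X, Y, Z] i) := by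
    intro i; fin_cases i <;> assumption
  exact (hindep.indepFun_prodMk hmeas 0 1 2 (by decide) (by decide)).comp
    (φ := fun p : ℝ × ℝ => p.1 - p.2) measurable_sub measurable_id

lemma map_mul_sub_add_mul_eq_gaussianReal (hX : Measurable X) (hY : Measurable Y)
    (hZ : Measurable Z) (hXlaw : P.map X = gaussianReal 0 1) (hYlaw : P.map Y = gaussianReal 0 1)
    (hZlaw : P.map Z = gaussianReal 0 1) (hindep : iIndepFun ![X, Y, Z] P) (c₁ c₂ : ℝ) :
    P.map (fun ω => c₁ * (X ω - Y ω) + c₂ * Z ω)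
      = gaussianReal 0 (2 * c₁ ^ 2 + c₂ ^ 2).toNNReal := by
  have hXY : IndepFun X Y P := by
    simpa using hindep.indepFun (show (0 : Fin 3) ≠ 1 by decide)
  have hdiff := map_sub_eq_gaussianReal_of_indepFun hY.aemeasurable hXY hXlaw hYlaw
  have hA : P.map (fun ω => c₁ * (X ω - Y ω))
      = gaussianReal 0 (.mk (c₁ ^ 2) (sq_nonneg _) * (1 + 1)) := by
    simpa using (gaussianReal_const_mul ⟨(hX.sub hY).aemeasurable, hdiff⟩ c₁).map_eq
  have hB : P.map (fun ω => c₂ * Z ω) = gaussianReal 0 (.mk (c₂ ^ 2) (sq_nonneg _) * 1) := by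
    simpa using (gaussianReal_const_mul ⟨hZ.aemeasurable, hZlaw⟩ c₂).map_eq
  have hAB : IndepFun (fun ω => c₁ * (X ω - Y ω)) (fun ω => c₂ * Z ω) P :=
    (indepFun_sub_of_iIndepFun hX hY hZ hindep).comp (φ := fun x => c₁ * x) (ψ := fun z => c₂ * z)
      (by fun_prop) (by fun_prop)
  convert gaussianReal_add_gaussianReal_of_indepFun hAB hA hB using 2
  · rfl
  · simp
  · apply NNReal.coe_injective
    simp only [Real.coe_toNNReal _ (by positivity : 0 ≤ 2 * c₁ ^ 2 + c₂ ^ 2)]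
    push_cast
    ring

lemma integral_sq_mul_add_mul_of_indepFun {A B W V : Ω → ℝ} (hA : MemLp A 2 P)
    (hB : MemLp B 2 P) (hW : MemLp W 2 P) (hV : MemLp V 2 P)
    (hind : IndepFun (fun ω => (A ω, B ω)) (fun ω => (W ω, V ω)) P)
    (hWV : ∫ ω, W ω * V ω ∂P = 0) :
    ∫ ω, (A ω * W ω + B ω * V ω) ^ 2 ∂P
      = (∫ ω, A ω ^ 2 ∂P) * ∫ ω, W ω ^ 2 ∂P + (∫ ω, B ω ^ 2 ∂P) * ∫ ω, V ω ^ 2 ∂P := by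
  have mA := hA.aestronglyMeasurable
  have mB := hB.aestronglyMeasurable
  have mW := hW.aestronglyMeasurable
  have mV := hV.aestronglyMeasurable
  have hAW : IndepFun (fun ω => A ω ^ 2) (fun ω => W ω ^ 2) P :=
    hind.comp (φ := fun p : ℝ × ℝ => p.1 ^ 2) (ψ := fun q : ℝ × ℝ => q.1 ^ 2)
      (by fun_prop) (by fun_prop)
  have hABWV : IndepFun (fun ω => A ω * B ω) (fun ω => W ω * V ω) P :=
    hind.comp (φ := fun p : ℝ × ℝ => p.1 * p.2) (ψ := fun q : ℝ × ℝ => q.1 * q.2)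
      (by fun_prop) (by fun_prop)
  have hBV : IndepFun (fun ω => B ω ^ 2) (fun ω => V ω ^ 2) P :=
    hind.comp (φ := fun p : ℝ × ℝ => p.2 ^ 2) (ψ := fun q : ℝ × ℝ => q.2 ^ 2)
      (by fun_prop) (by fun_prop)
  have iAW : Integrable (fun ω => A ω ^ 2 * W ω ^ 2) P :=
    hAW.integrable_mul hA.integrable_sq hW.integrable_sq
  have iABWV : Integrable (fun ω => 2 * (A ω * B ω * (W ω * V ω))) P :=
    (hABWV.integrable_mul (hA.integrable_mul hB) (hW.integrable_mul hV)).const_mul 2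
  have iBV : Integrable (fun ω => B ω ^ 2 * V ω ^ 2) P :=
    hBV.integrable_mul hB.integrable_sq hV.integrable_sq
  have iAW_ABWV : Integrable (fun ω => A ω ^ 2 * W ω ^ 2 + 2 * (A ω * B ω * (W ω * V ω))) P :=
    iAW.add iABWV
  calc ∫ ω, (A ω * W ω + B ω * V ω) ^ 2 ∂P
      = ∫ ω, (A ω ^ 2 * W ω ^ 2 + 2 * (A ω * B ω * (W ω * V ω)) + B ω ^ 2 * V ω ^ 2) ∂P := by
        congr 1 with ω; ring
    _ = (∫ ω, A ω ^ 2 * W ω ^ 2 ∂P) + 2 * (∫ ω, A ω * B ω * (W ω * V ω) ∂P)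
          + ∫ ω, B ω ^ 2 * V ω ^ 2 ∂P := by
        rw [integral_add iAW_ABWV iBV, integral_add iAW iABWV, integral_const_mul]
    _ = _ := by
        rw [hAW.integral_fun_mul_eq_mul_integral, hABWV.integral_fun_mul_eq_mul_integral,
          hBV.integral_fun_mul_eq_mul_integral, hWV]
        · ring
        all_goals fun_prop

lemma integral_sq_mul_sub_add_mul_of_indepFun (hX : Measurable X) (hY : Measurable Y)
    (hZ : Measurable Z) (hXlaw : P.map X = gaussianReal 0 1) (hYlaw : P.map Y = gaussianReal 0 1)
    (hZlaw : P.map Z = gaussianReal 0 1) (hindep : iIndepFun ![X, Y, Z] P) {A B : Ω → ℝ}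
    (hA : MemLp A 2 P) (hB : MemLp B 2 P)
    (hXYZ_AB : IndepFun (fun ω => (X ω, Y ω, Z ω)) (fun ω => (A ω, B ω)) P) :
    ∫ ω, (A ω * (X ω - Y ω) + B ω * Z ω) ^ 2 ∂P
      = 2 * ∫ ω, A ω ^ 2 ∂P + ∫ ω, B ω ^ 2 ∂P := by
  have hXY_meas : AEMeasurable (fun ω => X ω - Y ω) P := by fun_prop
  have hdiff : P.map (fun ω => X ω - Y ω) = gaussianReal 0 2 := by
    simpa using map_mul_sub_add_mul_eq_gaussianReal hX hY hZ hXlaw hYlaw hZlaw hindep 1 0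
  have hcross : ∫ ω, (X ω - Y ω) * Z ω ∂P = 0 := by
    rw [(indepFun_sub_of_iIndepFun hX hY hZ hindep).integral_fun_mul_eq_mul_integral
      hXY_meas.aestronglyMeasurable hZ.aestronglyMeasurable,
      integral_eq_zero_of_map_eq_gaussianReal hZ.aemeasurable hZlaw, mul_zero]
  have hind : IndepFun (fun ω => (A ω, B ω)) (fun ω => (X ω - Y ω, Z ω)) P :=
    hXYZ_AB.symm.comp (φ := id) (ψ := fun p : ℝ × ℝ × ℝ => (p.1 - p.2.1, p.2.2))
      measurable_id (by fun_prop)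
  rw [integral_sq_mul_add_mul_of_indepFun hA hB
      (memLp_two_of_map_eq_gaussianReal hXY_meas hdiff)
      (memLp_two_of_map_eq_gaussianReal hZ.aemeasurable hZlaw) hind hcross,
    integral_sq_eq_of_map_eq_gaussianReal hXY_meas hdiff,
    integral_sq_eq_of_map_eq_gaussianReal hZ.aemeasurable hZlaw]
  push_cast
  ring

end

theorem stmt_12_general {Ω : Type*} [MeasurableSpace Ω] (P : Measure Ω)
    (X Y Z : Ω → ℝ) (hX : Measurable X) (hY : Measurable Y) (hZ : Measurable Z)
    (hXlaw : Measure.map X P = gaussianReal 0 1)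
    (hYlaw : Measure.map Y P = gaussianReal 0 1)
    (hZlaw : Measure.map Z P = gaussianReal 0 1)
    (hindep : iIndepFun ![X, Y, Z] P)
    (c₁ c₂ : ℝ)
    (U₁ U₂ : Ω → ℝ) (hU₁ : Measurable U₁) (hU₂ : Measurable U₂)
    (hU₁int : Integrable (fun ω => (U₁ ω) ^ 2) P)
    (hU₂int : Integrable (fun ω => (U₂ ω) ^ 2) P)
    (hindep2 : IndepFun (fun ω => (X ω, Y ω, Z ω)) (fun ω => (U₁ ω, U₂ ω)) P)
    (b σ f I : ℝ) (hb : 0 < b) (hσ : 0 < σ) (hf : 0 < f) (hI : 0 < I) :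
    Measure.map (fun ω => c₁ * (X ω - Y ω) + c₂ * Z ω) P
      = gaussianReal 0 (Real.toNNReal (2 * c₁ ^ 2 + c₂ ^ 2)) ∧
    ∀ D : ℝ → ℝ,
      Tendsto D (nhdsWithin 0 (Set.Ioi 0))
        (nhds (∫ ω, (U₁ ω * Real.sqrt (b * σ / (2 * f)) * (X ω - Y ω)
          + (U₂ ω / Real.sqrt I) * Z ω) ^ 2 ∂P)) →
      Tendsto D (nhdsWithin 0 (Set.Ioi 0))
        (nhds ((b * σ / f) * ∫ ω, (U₁ ω) ^ 2 ∂P + (∫ ω, (U₂ ω) ^ 2 ∂P) / I)) := by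
  refine ⟨map_mul_sub_add_mul_eq_gaussianReal hX hY hZ hXlaw hYlaw hZlaw hindep c₁ c₂,
    fun D hD => ?_⟩
  set s := √(b * σ / (2 * f))
  have hU₁L2 : MemLp U₁ 2 P := (memLp_two_iff_integrable_sq hU₁.aestronglyMeasurable).mpr hU₁int
  have hU₂L2 : MemLp U₂ 2 P := (memLp_two_iff_integrable_sq hU₂.aestronglyMeasurable).mpr hU₂int
  have hind : IndepFun (fun ω => (X ω, Y ω, Z ω)) (fun ω => (U₁ ω * s, U₂ ω / √I)) P :=
    hindep2.comp (φ := id) (ψ := fun u : ℝ × ℝ => (u.1 * s, u.2 / √I)) measurable_id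
      (by fun_prop)
  have hsecond : ∫ ω, (U₁ ω * s * (X ω - Y ω) + U₂ ω / √I * Z ω) ^ 2 ∂P
      = (b * σ / f) * ∫ ω, U₁ ω ^ 2 ∂P + (∫ ω, U₂ ω ^ 2 ∂P) / I := by
    rw [integral_sq_mul_sub_add_mul_of_indepFun hX hY hZ hXlaw hYlaw hZlaw hindep
      (hU₁L2.mul_const s) (by simpa only [div_eq_mul_inv] using hU₂L2.mul_const (√I)⁻¹) hind]
    simp_rw [mul_pow, div_pow, s, Real.sq_sqrt (by positivity : 0 ≤ b * σ / (2 * f)),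
      Real.sq_sqrt hI.le, integral_mul_const, integral_div]
    field_simp
  rwa [hsecond] at hD

theorem stmt_12 {Ω : Type*} [MeasurableSpace Ω] (P : Measure Ω) [IsProbabilityMeasure P]
    (X Y Z : Ω → ℝ) (hX : Measurable X) (hY : Measurable Y) (hZ : Measurable Z)
    (hXlaw : Measure.map X P = gaussianReal 0 1)
    (hYlaw : Measure.map Y P = gaussianReal 0 1)
    (hZlaw : Measure.map Z P = gaussianReal 0 1)
    (hindep : iIndepFun ![X, Y, Z] P)
    (c₁ c₂ : ℝ)
    (U₁ U₂ : Ω → ℝ) (hU₁ : Measurable U₁) (hU₂ : Measurable U₂)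
    (hU₁int : Integrable (fun ω => (U₁ ω) ^ 2) P)
    (hU₂int : Integrable (fun ω => (U₂ ω) ^ 2) P)
    (hindep2 : IndepFun (fun ω => (X ω, Y ω, Z ω)) (fun ω => (U₁ ω, U₂ ω)) P)
    (b σ f I : ℝ) (hb : 0 < b) (hσ : 0 < σ) (hf : 0 < f) (hI : 0 < I) :
    Measure.map (fun ω => c₁ * (X ω - Y ω) + c₂ * Z ω) P
      = gaussianReal 0 (Real.toNNReal (2 * c₁ ^ 2 + c₂ ^ 2)) ∧
    ∀ D : ℝ → ℝ,
      Tendsto D (nhdsWithin 0 (Set.Ioi 0))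
        (nhds (∫ ω, (U₁ ω * Real.sqrt (b * σ / (2 * f)) * (X ω - Y ω)
          + (U₂ ω / Real.sqrt I) * Z ω) ^ 2 ∂P)) →
      Tendsto D (nhdsWithin 0 (Set.Ioi 0))
        (nhds ((b * σ / f) * ∫ ω, (U₁ ω) ^ 2 ∂P + (∫ ω, (U₂ ω) ^ 2 ∂P) / I)) :=
  stmt_12_general P X Y Z hX hY hZ hXlaw hYlaw hZlaw hindep c₁ c₂ U₁ U₂ hU₁ hU₂ hU₁int hU₂int
    hindep2 b σ f I hb hσ hf hI
end

section
/- Let γ : [0,T] → ℝ solve the Riccati equation γ'(t) = −2a(t)γ(t) − γ(t)² f(t)²/(ε² σ(t)²) + b(t)², γ(0) = 0, where a, b, f, σ are continuous, f, σ, b bounded away from 0 and bounded above. Then γ(t) ≥ 0 for all t ∈ [0,T] and γ(t) ≤ ε·C for all t ∈ [0,T], where C depends only on the bounds for a, b, f, σ (not on ε). -/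
/-!
Both bounds are barrier arguments. Where `γ` touches `0` its derivative is `b² > 0`, so it cannot
become negative. Where `γ` touches `ε C` the quadratic term equals `C² f² / σ²` (the `ε` cancels),
which for `C` large in terms of `c₀` and `M` alone beats the linear term `2 M C` and `b² ≤ M²`,
so `γ` cannot exceed `ε C`.
-/

open Set

theorem image_le_of_deriv_neg_of_eq {γ γ' : ℝ → ℝ} {t₀ T K : ℝ}
    (hγ : ∀ t ∈ Icc t₀ T, HasDerivAt γ (γ' t) t) (h₀ : γ t₀ ≤ K)
    (hK : ∀ t ∈ Ico t₀ T, γ t = K → γ' t < 0) : ∀ t ∈ Icc t₀ T, γ t ≤ K :=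
  fun _ ht => image_le_of_deriv_right_lt_deriv_boundary (B' := 0)
    (fun t ht => (hγ t ht).continuousAt.continuousWithinAt)
    (fun t ht => (hγ t (Ico_subset_Icc_self ht)).hasDerivWithinAt) h₀
    (fun _ => hasDerivAt_const _ K) hK ht

theorem le_image_of_deriv_pos_of_eq {γ γ' : ℝ → ℝ} {t₀ T K : ℝ}
    (hγ : ∀ t ∈ Icc t₀ T, HasDerivAt γ (γ' t) t) (h₀ : K ≤ γ t₀)
    (hK : ∀ t ∈ Ico t₀ T, γ t = K → 0 < γ' t) : ∀ t ∈ Icc t₀ T, K ≤ γ t := by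
  have := image_le_of_deriv_neg_of_eq (γ := -γ) (K := -K) (fun t ht => (hγ t ht).neg)
    (by simpa using h₀) (fun t ht h => by simpa using hK t ht (neg_inj.mp h))
  exact fun t ht => by simpa using this t ht

theorem riccati_drift_neg {a b f σ ε c₀ M C : ℝ} (hc₀ : 0 < c₀) (hε : 0 < ε) (hε₁ : ε ≤ 1)
    (hf : c₀ ≤ f) (hσ : c₀ ≤ σ) (hσM : σ ≤ M) (ha : |a| ≤ M) (hb : 0 ≤ b) (hbM : b ≤ M)
    (hC₁ : 1 ≤ C) (hC : (M + 1) ^ 2 * M ^ 2 ≤ C * c₀ ^ 2) :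
    -2 * a * (ε * C) - (ε * C) ^ 2 * f ^ 2 / (ε ^ 2 * σ ^ 2) + b ^ 2 < 0 := by
  have hσ₀ : 0 < σ := hc₀.trans_le hσ
  have hM : 0 < M := hσ₀.trans_le hσM
  have hquad : (ε * C) ^ 2 * f ^ 2 / (ε ^ 2 * σ ^ 2) = C ^ 2 * (f / σ) ^ 2 := by
    field_simp
  have hratio : c₀ / M ≤ f / σ := div_le_div₀ (hc₀.le.trans hf) hf hσ₀ hσM
  have hquad_ge : C * (M + 1) ^ 2 ≤ C ^ 2 * (f / σ) ^ 2 := calc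
    C * (M + 1) ^ 2 ≤ C * (C * (c₀ / M) ^ 2) := by
      gcongr
      rw [div_pow, ← mul_div_assoc, le_div_iff₀ (by positivity)]
      exact hC
    _ ≤ C ^ 2 * (f / σ) ^ 2 := by
      rw [← mul_assoc, ← sq]
      gcongr
  have hlin : -2 * a * (ε * C) ≤ 2 * M * C := calc
    -2 * a * (ε * C) ≤ 2 * M * (ε * C) :=
      mul_le_mul_of_nonneg_right (by linarith [neg_abs_le a]) (by positivity)
    _ ≤ 2 * M * C := by
      gcongr
      exact mul_le_of_le_one_left (by linarith) hε₁
  have hb2 : b ^ 2 ≤ M ^ 2 := pow_le_pow_left₀ hb hbM 2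
  rw [hquad]
  nlinarith

theorem stmt_14_general (T : ℝ) (hT : 0 < T)
    (a b f σ : ℝ → ℝ)
    (c₀ M : ℝ) (hc₀ : 0 < c₀)
    (hbnd : ∀ t ∈ Set.Icc (0:ℝ) T,
      c₀ ≤ f t ∧ c₀ ≤ σ t ∧ c₀ ≤ b t ∧ |a t| ≤ M ∧ f t ≤ M ∧ σ t ≤ M ∧ b t ≤ M) :
    ∃ C > 0, ∀ ε ∈ Set.Ioc (0:ℝ) 1, ∀ γ : ℝ → ℝ,
      γ 0 = 0 →
      (∀ t ∈ Set.Icc (0:ℝ) T,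
        HasDerivAt γ (-2 * a t * γ t - γ t ^ 2 * f t ^ 2 / (ε ^ 2 * σ t ^ 2) + b t ^ 2) t) →
      ∀ t ∈ Set.Icc (0:ℝ) T, 0 ≤ γ t ∧ γ t ≤ ε * C := by
  obtain ⟨hf₀, -, -, -, hfM, -⟩ := hbnd 0 ⟨le_rfl, hT.le⟩
  have hM : 0 < M := hc₀.trans_le (hf₀.trans hfM)
  set C := (M * (M + 1) / c₀) ^ 2
  have hC₁ : 1 ≤ C := one_le_pow₀ <| by
    rw [le_div_iff₀ hc₀]
    nlinarith
  have hC : (M + 1) ^ 2 * M ^ 2 ≤ C * c₀ ^ 2 := le_of_eq <| by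
    simp only [C]
    field_simp
  refine ⟨C, by positivity, fun ε ⟨hε, hε₁⟩ γ hγ₀ hγ => ?_⟩
  have hnonneg := le_image_of_deriv_pos_of_eq hγ hγ₀.ge fun t ht hγt => by
    obtain ⟨-, -, hb, -⟩ := hbnd t (Ico_subset_Icc_self ht)
    rw [hγt]
    simpa using pow_pos (hc₀.trans_le hb) 2
  have hupper := image_le_of_deriv_neg_of_eq (K := ε * C) hγ (hγ₀.trans_le (by positivity))
    fun t ht hγt => by
      obtain ⟨hf, hσ, hb, ha, -, hσM, hbM⟩ := hbnd t (Ico_subset_Icc_self ht)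
      rw [hγt]
      exact riccati_drift_neg hc₀ hε hε₁ hf hσ hσM ha (hc₀.le.trans hb) hbM hC₁ hC
  exact fun t ht => ⟨hnonneg t ht, hupper t ht⟩

theorem stmt_14 (T : ℝ) (hT : 0 < T)
    (a b f σ : ℝ → ℝ)
    (ha : Continuous a) (hb : Continuous b) (hf : Continuous f) (hσ : Continuous σ)
    (c₀ M : ℝ) (hc₀ : 0 < c₀)
    (hbnd : ∀ t ∈ Set.Icc (0:ℝ) T,
      c₀ ≤ f t ∧ c₀ ≤ σ t ∧ c₀ ≤ b t ∧ |a t| ≤ M ∧ f t ≤ M ∧ σ t ≤ M ∧ b t ≤ M) :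
    ∃ C > 0, ∀ ε ∈ Set.Ioc (0:ℝ) 1, ∀ γ : ℝ → ℝ,
      γ 0 = 0 →
      (∀ t ∈ Set.Icc (0:ℝ) T,
        HasDerivAt γ (-2 * a t * γ t - γ t ^ 2 * f t ^ 2 / (ε ^ 2 * σ t ^ 2) + b t ^ 2) t) →
      ∀ t ∈ Set.Icc (0:ℝ) T, 0 ≤ γ t ∧ γ t ≤ ε * C :=
  stmt_14_general T hT a b f σ c₀ M hc₀ hbnd
end

section
/- Let γ_* : (0,T] → ℝ satisfy γ_*'(t) = −2a(t)γ_*(t) − (γ_*(t)² f(t)² /(ε σ(t)²)) + b(t)²/ε with γ_*(0) = 0, and set γ₀(t) = b(t)σ(t)/f(t), where a,b,f,σ are continuous, f,σ,b ≥ c₀ > 0 and bounded above. Then for every t₀ ∈ (0,T], sup_{t₀ ≤ t ≤ T} |γ_*(t) − γ₀(t)| → 0 as ε → 0. -/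
/-!
Since `b² / ε = (f² / (ε σ²)) γ₀²`, the equation reads `γ' = -2 a γ + (f² / (ε σ²)) (γ₀² - γ²)`:
a bounded drift plus a relaxation towards `γ₀` of stiffness at least `c₀² / (M² ε)`.
Fences at `0` and at a large level `B` keep `γ` in `[0, B]`, so the drift stays bounded.
Fix `δ > 0` and a window `[t - h, t]` on which `γ₀` oscillates by at most `δ`. While `γ` is more
than `2 δ` away from `γ₀ t`, the stiff term moves it towards `γ₀ t` at speed of order `δ / ε`,
which for small `ε` crosses `[0, B]` in time less than `h`; hence `|γ t - γ₀ t| ≤ 2 δ`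
uniformly in `t ≥ t₀` once `h ≤ t₀`.
-/

open Filter Set Topology

theorem le_of_deriv_neg_at_level {g g' : ℝ → ℝ} {s t K : ℝ}
    (hg : ∀ x ∈ Icc s t, HasDerivAt g (g' x) x) (hs : g s ≤ K)
    (hK : ∀ x ∈ Ico s t, g x = K → g' x < 0) : ∀ x ∈ Icc s t, g x ≤ K :=
  image_le_of_deriv_right_lt_deriv_boundary (B := fun _ => K) (B' := fun _ => 0)
    (fun x hx => (hg x hx).continuousAt.continuousWithinAt)
    (fun x hx => (hg x (Ico_subset_Icc_self hx)).hasDerivWithinAt) hs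
    (fun x => hasDerivAt_const x K) hK

theorem ge_of_deriv_pos_at_level {g g' : ℝ → ℝ} {s t K : ℝ}
    (hg : ∀ x ∈ Icc s t, HasDerivAt g (g' x) x) (hs : K ≤ g s)
    (hK : ∀ x ∈ Ico s t, g x = K → 0 < g' x) : ∀ x ∈ Icc s t, K ≤ g x := by
  intro x hx
  have := le_of_deriv_neg_at_level (g := fun x => -g x) (g' := fun x => -g' x) (K := -K)
    (fun x hx => (hg x hx).neg) (neg_le_neg hs)
    (fun x hx hgx => neg_neg_iff_pos.2 (hK x hx (neg_inj.1 hgx))) x hx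
  exact neg_le_neg_iff.1 this

/-- The barrier `x ↦ K - R (x - s)` pushes `g` down to the level `L`, where it then stays. -/
theorem le_of_deriv_lt_neg_above {g g' : ℝ → ℝ} {s t K L R : ℝ} (hst : s ≤ t)
    (hg : ∀ x ∈ Icc s t, HasDerivAt g (g' x) x) (hs : g s ≤ K) (hR : 0 < R)
    (hL : ∀ x ∈ Icc s t, L ≤ g x → g' x < -R) (htime : K - R * (t - s) ≤ L) : g t ≤ L := by
  set K' := max K L
  set τ := s + (K' - L) / R
  have hK'L : 0 ≤ K' - L := sub_nonneg.2 (le_max_right K L)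
  have hsτ : s ≤ τ := le_add_of_nonneg_right (div_nonneg hK'L hR.le)
  have hτt : τ ≤ t := by
    have : K' - L ≤ R * (t - s) := sub_le_iff_le_add.2
      (max_le (by linarith) (le_add_of_nonneg_left (mul_nonneg hR.le (sub_nonneg.2 hst))))
    linarith [(div_le_iff₀' hR).2 this]
  have hBτ : K' - R * (τ - s) = L := by
    simp only [τ, add_sub_cancel_left]; field_simp; ring
  have hgτ : g τ ≤ L := by
    have := image_le_of_deriv_right_lt_deriv_boundary (f := g) (f' := g') (a := s) (b := τ)
      (B := fun x => K' - R * (x - s)) (B' := fun _ => -R)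
      (fun x hx => (hg x ⟨hx.1, hx.2.trans hτt⟩).continuousAt.continuousWithinAt)
      (fun x hx => (hg x ⟨hx.1, hx.2.le.trans hτt⟩).hasDerivWithinAt)
      (by simp only [sub_self, mul_zero, sub_zero]; exact hs.trans (le_max_left K L))
      (fun x => by simpa using (((hasDerivAt_id x).sub_const s).const_mul R).const_sub K')
      (fun x hx hgx => hL x ⟨hx.1, hx.2.le.trans hτt⟩ (by
        rw [hgx, ← hBτ]; nlinarith [hx.2]))
      ⟨hsτ, le_rfl⟩
    rwa [hBτ] at this
  exact le_of_deriv_neg_at_level (fun x hx => hg x ⟨hsτ.trans hx.1, hx.2⟩) hgτ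
    (fun x hx hgx => (hL x ⟨hsτ.trans hx.1, hx.2.le⟩ hgx.ge).trans (neg_lt_zero.2 hR))
    t ⟨hτt, le_rfl⟩

theorem ge_of_deriv_gt_below {g g' : ℝ → ℝ} {s t K L R : ℝ} (hst : s ≤ t)
    (hg : ∀ x ∈ Icc s t, HasDerivAt g (g' x) x) (hs : K ≤ g s) (hR : 0 < R)
    (hL : ∀ x ∈ Icc s t, g x ≤ L → R < g' x) (htime : L ≤ K + R * (t - s)) : L ≤ g t := by
  have := le_of_deriv_lt_neg_above (g := fun x => -g x) (g' := fun x => -g' x) (K := -K)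
    (L := -L) hst (fun x hx => (hg x hx).neg) (neg_le_neg hs) hR
    (fun x hx hgx => neg_lt_neg (hL x hx (neg_le_neg_iff.1 hgx))) (by linarith)
  exact neg_le_neg_iff.1 this

theorem mul_le_sq_sub_sq {u v δ m : ℝ} (hu : 0 ≤ u) (hδ : 0 ≤ δ) (huv : u + δ ≤ v)
    (hm : m ≤ v) : δ * m ≤ v ^ 2 - u ^ 2 :=
  calc δ * m ≤ δ * (v + u) := mul_le_mul_of_nonneg_left (by linarith) hδ
    _ ≤ (v - u) * (v + u) := mul_le_mul_of_nonneg_right (by linarith) (by linarith)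
    _ = v ^ 2 - u ^ 2 := by ring

/-- With `l = f² / (ε σ²)` and `q = b σ / f = γ₀` this is the right-hand side of the equation
for `γ_*`: the stiff term pulls `y` towards `q x` at rate `l x`, against a drift `-2 a y`. -/
def riccatiField (a l q : ℝ → ℝ) (x y : ℝ) : ℝ := -2 * a x * y + l x * (q x ^ 2 - y ^ 2)

theorem kalman_rhs_eq_riccatiField {a b f σ : ℝ → ℝ} {ε x y : ℝ} (hf : f x ≠ 0)
    (hσ : σ x ≠ 0) :
    -2 * a x * y - y ^ 2 * f x ^ 2 / (ε * σ x ^ 2) + b x ^ 2 / ε =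
      riccatiField a (fun x => f x ^ 2 / σ x ^ 2 / ε) (fun x => b x * σ x / f x) x y := by
  rw [riccatiField]
  field_simp
  ring

theorem abs_two_mul_mul_le {A y M B : ℝ} (hA : |A| ≤ M) (hy : y ∈ Icc 0 B) :
    |2 * A * y| ≤ 2 * M * B := by
  rw [abs_mul, abs_mul, abs_two, abs_of_nonneg hy.1, mul_assoc, mul_assoc]
  exact mul_le_mul_of_nonneg_left (mul_le_mul hA hy.2 hy.1 ((abs_nonneg A).trans hA)) two_pos.le

section Riccati

variable {a l q : ℝ → ℝ} {x y M B Λ δ m : ℝ}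

theorem riccatiField_le (ha : |a x| ≤ M) (hy : y ∈ Icc 0 B) (hl : Λ ≤ l x) (hΛ : 0 ≤ Λ)
    (hq : 0 ≤ q x) (hδ : 0 ≤ δ) (hqy : q x + δ ≤ y) (hm : m ≤ y) :
    riccatiField a l q x y ≤ 2 * M * B - Λ * (δ * m) := by
  have hdrift := (abs_le.1 (abs_two_mul_mul_le ha hy)).1
  have hsq := mul_le_sq_sub_sq hq hδ hqy hm
  have hstiff : l x * (q x ^ 2 - y ^ 2) ≤ Λ * (q x ^ 2 - y ^ 2) :=
    mul_le_mul_of_nonpos_right hl (sub_nonpos.2 (pow_le_pow_left₀ hq (by linarith) 2))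
  have := mul_le_mul_of_nonneg_left hsq hΛ
  rw [riccatiField]
  linarith

theorem le_riccatiField (ha : |a x| ≤ M) (hy : y ∈ Icc 0 B) (hl : Λ ≤ l x) (hΛ : 0 ≤ Λ)
    (hδ : 0 ≤ δ) (hyq : y + δ ≤ q x) (hm : m ≤ q x) :
    Λ * (δ * m) - 2 * M * B ≤ riccatiField a l q x y := by
  have hdrift := (abs_le.1 (abs_two_mul_mul_le ha hy)).2
  have hsq := mul_le_sq_sub_sq hy.1 hδ hyq hm
  have hstiff : Λ * (q x ^ 2 - y ^ 2) ≤ l x * (q x ^ 2 - y ^ 2) :=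
    mul_le_mul_of_nonneg_right hl (sub_nonneg.2 (pow_le_pow_left₀ hy.1 (by linarith) 2))
  have := mul_le_mul_of_nonneg_left hsq hΛ
  rw [riccatiField]
  linarith

variable {g : ℝ → ℝ} {s t : ℝ}

theorem riccati_mem_Icc {Γ : ℝ}
    (hg : ∀ x ∈ Icc s t, HasDerivAt g (riccatiField a l q x (g x)) x) (hs : g s ∈ Icc 0 B)
    (ha : ∀ x ∈ Icc s t, |a x| ≤ M) (hl : ∀ x ∈ Icc s t, Λ ≤ l x)
    (hΛ : 0 < Λ) (hq : ∀ x ∈ Icc s t, q x ∈ Ioc 0 Γ) (hΓB : Γ ≤ B)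
    (hB : 2 * M < Λ * (B - Γ)) : ∀ x ∈ Icc s t, g x ∈ Icc 0 B := by
  intro x hx
  refine ⟨ge_of_deriv_pos_at_level hg hs.1 (fun y hy hgy => ?_) x hx,
    le_of_deriv_neg_at_level hg hs.2 (fun y hy hgy => ?_) x hx⟩
  all_goals
    replace hy := Ico_subset_Icc_self hy
    obtain ⟨hq0, hqΓ⟩ := hq y hy
    rw [hgy]
  · simpa [riccatiField] using mul_pos (hΛ.trans_le (hl y hy)) (pow_pos hq0 2)
  · have hB0 : 0 < B := hq0.trans_le (hqΓ.trans hΓB)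
    calc riccatiField a l q y B ≤ 2 * M * B - Λ * ((B - Γ) * B) :=
          riccatiField_le (ha y hy) ⟨hB0.le, le_rfl⟩ (hl y hy) hΛ.le hq0.le (sub_nonneg.2 hΓB)
            (by linarith) le_rfl
      _ < 0 := by nlinarith

theorem abs_sub_le_of_riccati {R : ℝ} (hst : s ≤ t)
    (hg : ∀ x ∈ Icc s t, HasDerivAt g (riccatiField a l q x (g x)) x)
    (hgB : ∀ x ∈ Icc s t, g x ∈ Icc 0 B) (ha : ∀ x ∈ Icc s t, |a x| ≤ M)
    (hl : ∀ x ∈ Icc s t, Λ ≤ l x) (hΛ : 0 ≤ Λ) (hq : ∀ x ∈ Icc s t, q x ∈ Icc m B)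
    (hm : 0 ≤ m) (hδ : 0 ≤ δ) (hosc : ∀ x ∈ Icc s t, |q x - q t| ≤ δ) (hR : 0 < R)
    (hrate : 2 * M * B + R < Λ * (δ * m)) (htime : B ≤ R * (t - s)) :
    |g t - q t| ≤ 2 * δ := by
  have hs : s ∈ Icc s t := ⟨le_rfl, hst⟩
  obtain ⟨hmt, htB⟩ := hq t ⟨hst, le_rfl⟩
  have hup : g t ≤ q t + 2 * δ := by
    refine le_of_deriv_lt_neg_above hst hg (hgB s hs).2 hR (fun x hx hgx => ?_) (by linarith)
    have hqx := (abs_le.1 (hosc x hx)).2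
    have := riccatiField_le (ha x hx) (hgB x hx) (hl x hx) hΛ (hm.trans (hq x hx).1) hδ
      (by linarith) (by linarith : m ≤ g x)
    linarith
  have hlo : q t - 2 * δ ≤ g t := by
    refine ge_of_deriv_gt_below hst hg (hgB s hs).1 hR (fun x hx hgx => ?_) (by linarith)
    have hqx := (abs_le.1 (hosc x hx)).1
    have := le_riccatiField (ha x hx) (hgB x hx) (hl x hx) hΛ hδ (by linarith) (hq x hx).1
    linarith
  exact abs_le.2 ⟨by linarith, by linarith⟩

end Riccati

theorem exists_forall_abs_sub_le_of_continuousOn {q : ℝ → ℝ} {T t₀ δ : ℝ}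
    (hq : ContinuousOn q (Icc 0 T)) (ht₀ : 0 < t₀) (hδ : 0 < δ) :
    ∃ h ∈ Ioc 0 t₀, ∀ t ∈ Icc t₀ T, ∀ x ∈ Icc (t - h) t, |q x - q t| ≤ δ := by
  obtain ⟨h₁, hh₁, hq₁⟩ := Metric.uniformContinuousOn_iff.1
    (isCompact_Icc.uniformContinuousOn_of_continuous hq) δ hδ
  refine ⟨min t₀ (h₁ / 2), ⟨lt_min ht₀ (half_pos hh₁), min_le_left _ _⟩, fun t ht x hx => ?_⟩
  have hx0 : 0 ≤ x := by linarith [hx.1, min_le_left t₀ (h₁ / 2), ht.1]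
  have hxt : dist x t < h₁ := by
    rw [Real.dist_eq, abs_of_nonpos (by linarith [hx.2])]
    linarith [hx.1, min_le_right t₀ (h₁ / 2)]
  rw [← Real.dist_eq]
  exact (hq₁ x ⟨hx0, hx.2.trans ht.2⟩ t ⟨ht₀.le.trans ht.1, ht.2⟩ hxt).le

theorem exists_forall_riccati_mem_Icc {a k q : ℝ → ℝ} {g : ℝ → ℝ → ℝ} {T M κ Γ : ℝ}
    (hg0 : ∀ ε ∈ Ioc (0 : ℝ) 1, g ε 0 = 0)
    (hg : ∀ ε ∈ Ioc (0 : ℝ) 1, ∀ x ∈ Icc 0 T,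
      HasDerivAt (g ε) (riccatiField a (fun x => k x / ε) q x (g ε x)) x)
    (ha : ∀ x ∈ Icc 0 T, |a x| ≤ M) (hM : 0 ≤ M) (hk : ∀ x ∈ Icc 0 T, κ ≤ k x) (hκ : 0 < κ)
    (hq : ∀ x ∈ Icc 0 T, q x ∈ Ioc 0 Γ) (hΓ : 0 ≤ Γ) :
    ∃ B, Γ ≤ B ∧ ∀ ε ∈ Ioc (0 : ℝ) 1, ∀ x ∈ Icc 0 T, g ε x ∈ Icc 0 B := by
  set B := Γ + 2 * M / κ + 1
  have hΓB : Γ ≤ B := by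
    have : 0 ≤ 2 * M / κ := by positivity
    linarith
  refine ⟨B, hΓB, fun ε hε => riccati_mem_Icc (hg ε hε) ?_ ha
    (fun x hx => div_le_div_of_nonneg_right (hk x hx) hε.1.le) (div_pos hκ hε.1) hq hΓB ?_⟩
  · rw [hg0 ε hε]
    exact ⟨le_rfl, by linarith⟩
  · have hκB : κ * (B - Γ) = 2 * M + κ := by simp only [B]; field_simp; ring
    have := mul_le_mul_of_nonneg_right (le_div_self hκ.le hε.1 hε.2) (sub_nonneg.2 hΓB)
    linarith

theorem tendstoUniformlyOn_riccati {a k q : ℝ → ℝ} {g : ℝ → ℝ → ℝ} {T t₀ M κ m Γ : ℝ}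
    (ht₀ : 0 < t₀) (ht₀T : t₀ ≤ T) (hg0 : ∀ ε ∈ Ioc (0 : ℝ) 1, g ε 0 = 0)
    (hg : ∀ ε ∈ Ioc (0 : ℝ) 1, ∀ x ∈ Icc 0 T,
      HasDerivAt (g ε) (riccatiField a (fun x => k x / ε) q x (g ε x)) x)
    (ha : ∀ x ∈ Icc 0 T, |a x| ≤ M) (hk : ∀ x ∈ Icc 0 T, κ ≤ k x) (hκ : 0 < κ)
    (hq : ∀ x ∈ Icc 0 T, q x ∈ Icc m Γ) (hm : 0 < m) (hqc : ContinuousOn q (Icc 0 T)) :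
    TendstoUniformlyOn g q (𝓝[>] 0) (Icc t₀ T) := by
  have ht₀' : t₀ ∈ Icc 0 T := ⟨ht₀.le, ht₀T⟩
  have hM : 0 ≤ M := (abs_nonneg _).trans (ha t₀ ht₀')
  have hΓ : 0 < Γ := hm.trans_le ((hq t₀ ht₀').1.trans (hq t₀ ht₀').2)
  obtain ⟨B, hΓB, hgB⟩ := exists_forall_riccati_mem_Icc hg0 hg ha hM hk hκ
    (fun x hx => ⟨hm.trans_le (hq x hx).1, (hq x hx).2⟩) hΓ.le
  have hB : 0 < B := hΓ.trans_le hΓB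
  rw [Metric.tendstoUniformlyOn_iff]
  intro η hη
  obtain ⟨h, ⟨hh, hht₀⟩, hosc⟩ :=
    exists_forall_abs_sub_le_of_continuousOn hqc ht₀ (by positivity : 0 < η / 4)
  set R := B / h
  have hc : 0 < 2 * M * B + R := by positivity
  filter_upwards [Ioo_mem_nhdsGT (lt_min one_pos
    (by positivity : 0 < κ * (η / 4 * m) / (2 * M * B + R)))] with ε ⟨hε0, hε⟩
  intro t ht
  have hε1 : ε ∈ Ioc (0 : ℝ) 1 := ⟨hε0, (hε.trans_le (min_le_left _ _)).le⟩
  have hsub : Icc (t - h) t ⊆ Icc 0 T := Icc_subset_Icc (by linarith [ht.1]) ht.2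
  have hrate : 2 * M * B + R < κ / ε * (η / 4 * m) := by
    have := hε.trans_le (min_le_right _ _)
    rw [lt_div_iff₀ hc] at this
    rw [div_mul_eq_mul_div, lt_div_iff₀ hε0]
    linarith
  rw [dist_comm, Real.dist_eq]
  calc |g ε t - q t| ≤ 2 * (η / 4) :=
        abs_sub_le_of_riccati (by linarith) (fun x hx => hg ε hε1 x (hsub hx))
          (fun x hx => hgB ε hε1 x (hsub hx)) (fun x hx => ha x (hsub hx))
          (fun x hx => div_le_div_of_nonneg_right (hk x (hsub hx)) hε0.le) (by positivity)
          (fun x hx => ⟨(hq x (hsub hx)).1, (hq x (hsub hx)).2.trans hΓB⟩) hm.le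
          (by positivity) (hosc t ht) (div_pos hB hh) hrate
          (by rw [sub_sub_cancel, div_mul_cancel₀ B hh.ne'])
    _ < η := by linarith

theorem tendsto_iSup_abs_sub_of_tendstoUniformlyOn {ι α : Type*} {F : ι → α → ℝ} {f : α → ℝ}
    {l : Filter ι} {s : Set α} (h : TendstoUniformlyOn F f l s) :
    Tendsto (fun i => ⨆ x : s, |F i x - f x|) l (𝓝 0) := by
  rw [Metric.tendsto_nhds]
  intro η hη
  filter_upwards [Metric.tendstoUniformlyOn_iff.1 h (η / 2) (half_pos hη)] with i hi
  have hsup : ⨆ x : s, |F i x - f x| ≤ η / 2 :=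
    Real.iSup_le (fun x => by rw [abs_sub_comm, ← Real.dist_eq]; exact (hi x x.2).le)
      (half_pos hη).le
  rw [Real.dist_eq, sub_zero, abs_of_nonneg (Real.iSup_nonneg fun _ => abs_nonneg _)]
  linarith

theorem mul_div_mem_Icc {u v w c M : ℝ} (hc : 0 < c) (hu : u ∈ Icc c M) (hv : v ∈ Icc c M)
    (hw : w ∈ Icc c M) : u * v / w ∈ Icc (c ^ 2 / M) (M ^ 2 / c) := by
  have hu0 := hc.trans_le hu.1
  have hv0 := hc.trans_le hv.1
  exact ⟨div_le_div₀ (by positivity) (by nlinarith [hu.1, hv.1]) (hc.trans_le hw.1) hw.2,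
    div_le_div₀ (by positivity) (by nlinarith [hu.2, hv.2]) hc hw.1⟩

theorem sq_div_sq_le_sq_div_sq {u v c M : ℝ} (hc : 0 < c) (hu : c ≤ u) (hv : v ∈ Icc c M) :
    c ^ 2 / M ^ 2 ≤ u ^ 2 / v ^ 2 :=
  div_le_div₀ (sq_nonneg u) (pow_le_pow_left₀ hc.le hu 2) (pow_pos (hc.trans_le hv.1) 2)
    (pow_le_pow_left₀ (hc.le.trans hv.1) hv.2 2)

theorem stmt_15_general (T c₀ M : ℝ) (hc₀ : 0 < c₀)
    (a b f σ : ℝ → ℝ)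
    (hb : Continuous b) (hf : Continuous f) (hσ : Continuous σ)
    (hbnd : ∀ t ∈ Set.Icc (0:ℝ) T,
      c₀ ≤ f t ∧ c₀ ≤ σ t ∧ c₀ ≤ b t ∧ |a t| ≤ M ∧ f t ≤ M ∧ σ t ≤ M ∧ b t ≤ M)
    (γs : ℝ → ℝ → ℝ)
    (hode : ∀ ε ∈ Set.Ioc (0:ℝ) 1, γs ε 0 = 0 ∧
      ∀ t ∈ Set.Icc (0:ℝ) T,
        HasDerivAt (γs ε)
          (-2 * a t * γs ε t - (γs ε t) ^ 2 * f t ^ 2 / (ε * σ t ^ 2) + b t ^ 2 / ε) t) :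
    ∀ t₀ ∈ Set.Ioc (0:ℝ) T,
      Tendsto (fun ε => ⨆ t : Set.Icc t₀ T, |γs ε (t : ℝ) - b t * σ t / f t|)
        (nhdsWithin 0 (Set.Ioi 0)) (nhds 0) := by
  rintro t₀ ⟨ht₀, ht₀T⟩
  have hf0 : ∀ t ∈ Icc 0 T, f t ≠ 0 := fun t ht => (hc₀.trans_le (hbnd t ht).1).ne'
  have hσ0 : ∀ t ∈ Icc 0 T, σ t ≠ 0 := fun t ht => (hc₀.trans_le (hbnd t ht).2.1).ne'
  have hM : 0 < M := by
    obtain ⟨hft, -, -, -, hfM, -⟩ := hbnd t₀ ⟨ht₀.le, ht₀T⟩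
    linarith
  have hq : ∀ t ∈ Icc 0 T, b t * σ t / f t ∈ Icc (c₀ ^ 2 / M) (M ^ 2 / c₀) := fun t ht => by
    obtain ⟨hft, hσt, hbt, -, hfM, hσM, hbM⟩ := hbnd t ht
    exact mul_div_mem_Icc hc₀ ⟨hbt, hbM⟩ ⟨hσt, hσM⟩ ⟨hft, hfM⟩
  have hk : ∀ t ∈ Icc 0 T, c₀ ^ 2 / M ^ 2 ≤ f t ^ 2 / σ t ^ 2 := fun t ht => by
    obtain ⟨hft, hσt, -, -, -, hσM, -⟩ := hbnd t ht
    exact sq_div_sq_le_sq_div_sq hc₀ hft ⟨hσt, hσM⟩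
  have key : TendstoUniformlyOn γs (fun t => b t * σ t / f t) (𝓝[>] 0) (Icc t₀ T) :=
    tendstoUniformlyOn_riccati (a := a) (k := fun t => f t ^ 2 / σ t ^ 2) ht₀ ht₀T
      (fun ε hε => (hode ε hε).1)
      (fun ε hε t ht => ((hode ε hε).2 t ht).congr_deriv
        (kalman_rhs_eq_riccatiField (hf0 t ht) (hσ0 t ht)))
      (fun t ht => (hbnd t ht).2.2.2.1) hk (by positivity) hq (by positivity)
      ((hb.continuousOn.mul hσ.continuousOn).div hf.continuousOn hf0)
  exact (tendsto_iSup_abs_sub_of_tendstoUniformlyOn key :)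

theorem stmt_15 (T c₀ M : ℝ) (hT : 0 < T) (hc₀ : 0 < c₀)
    (a b f σ : ℝ → ℝ)
    (ha : Continuous a) (hb : Continuous b) (hf : Continuous f) (hσ : Continuous σ)
    (hbnd : ∀ t ∈ Set.Icc (0:ℝ) T,
      c₀ ≤ f t ∧ c₀ ≤ σ t ∧ c₀ ≤ b t ∧ |a t| ≤ M ∧ f t ≤ M ∧ σ t ≤ M ∧ b t ≤ M)
    (γs : ℝ → ℝ → ℝ)
    (hode : ∀ ε ∈ Set.Ioc (0:ℝ) 1, γs ε 0 = 0 ∧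
      ∀ t ∈ Set.Icc (0:ℝ) T,
        HasDerivAt (γs ε)
          (-2 * a t * γs ε t - (γs ε t) ^ 2 * f t ^ 2 / (ε * σ t ^ 2) + b t ^ 2 / ε) t) :
    ∀ t₀ ∈ Set.Ioc (0:ℝ) T,
      Tendsto (fun ε => ⨆ t : Set.Icc t₀ T, |γs ε (t : ℝ) - b t * σ t / f t|)
        (nhdsWithin 0 (Set.Ioi 0)) (nhds 0) :=
  stmt_15_general T c₀ M hc₀ a b f σ hb hf hσ hbnd γs hode
end
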